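/- Let Δ ⊆ ℕ^d be a finite standard set. The Connect Four decompositions of Δ are in bijection with the standard decompositions of the standard graph G(Δ). -/

import Mathlib

open Pointwise

/-- A *standard set* in `ℕ^n`: a finite set whose complement `C` satisfies `C + ℕ^n = C`. -/
def IsStdSet {n : ℕ} (S : Set (Fin n → ℕ)) : Prop :=
  S.Finite ∧ Sᶜ + (Set.univ : Set (Fin n → ℕ)) = Sᶜ

/-- Projection `ℕ^{d+1} → ℕ^d` to the first `d` coordinates. -/
def proj {d : ℕ} (b : Fin (d + 1) → ℕ) : Fin d → ℕ := fun i => b i.castSucc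

/-- The *height* of `S ⊆ ℕ^{d+1}` over `γ ∈ ℕ^d`: the cardinality of the fiber of the
projection over `γ`. -/
noncomputable def height {d : ℕ} (S : Set (Fin (d + 1) → ℕ)) (g : Fin d → ℕ) : ℕ :=
  {b ∈ S | proj b = g}.ncard

/-- The *Connect Four sum* of two subsets of `ℕ^{d+1}`. -/
def C4sum {d : ℕ} (S T : Set (Fin (d + 1) → ℕ)) : Set (Fin (d + 1) → ℕ) :=
  {b | b (Fin.last d) < height S (proj b) + height T (proj b)}

/-- The edge set of the standard graph of `Δ`: edges `(γ + e_i, γ)` between nodes. -/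
def sEdges {d : ℕ} (S : Set (Fin (d + 1) → ℕ)) : Set ((Fin d → ℕ) × (Fin d → ℕ)) :=
  {p | p.1 ∈ proj '' S ∧ p.2 ∈ proj '' S ∧ ∃ i : Fin d, p.1 = p.2 + Pi.single i 1}

/-- A *standard component* of the standard graph of `Δ`: a standard `{0,1}`-labeling of
the nodes (zero outside the nodes), not identically zero, whose difference from the
height labeling is again standard. -/
def IsStdCompOf {d : ℕ} (S : Set (Fin (d + 1) → ℕ)) (H : (Fin d → ℕ) → ℕ) : Prop :=
  (∀ g, H g ≤ 1) ∧ (∀ g, g ∉ proj '' S → H g = 0) ∧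
  (∀ p ∈ sEdges S, H p.1 ≤ H p.2) ∧
  (∀ g, H g ≤ height S g) ∧
  (∀ p ∈ sEdges S, height S p.1 - H p.1 ≤ height S p.2 - H p.2) ∧
  (∃ g, H g ≠ 0)

/-- A *standard decomposition* of the standard graph of `Δ`: a multiset of standard
components whose labels sum pointwise to the height labeling of `Δ`. -/
def IsStdDecompOf {d : ℕ} (S : Set (Fin (d + 1) → ℕ))
    (D : Multiset ((Fin d → ℕ) → ℕ)) : Prop :=
  (∀ H ∈ D, IsStdCompOf S H) ∧ ∀ g, (D.map (fun H => H g)).sum = height S g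

/-- A *Connect Four decomposition* of `Δ ⊆ ℕ^{d+1}`: a multiset of nonempty standard sets
in `ℕ^d` (each viewed in `ℕ^{d+1}` via `γ ↦ (γ, 0)`) whose Connect Four sum is `Δ`;
equivalently, `β ∈ Δ` iff the last coordinate of `β` is less than the number of members
containing the projection of `β` (counted with multiplicity). -/
def IsC4Decomp {d : ℕ} (S : Set (Fin (d + 1) → ℕ))
    (D : Multiset (Set (Fin d → ℕ))) : Prop :=
  (∀ T ∈ D, IsStdSet T ∧ T.Nonempty) ∧
  ∀ b, b ∈ S ↔ b (Fin.last d) <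
    (D.map (fun T => T.indicator (fun _ => 1) (proj b))).sum


/-!
A standard set in `ℕ^(d+1)` is the same as a finite lower set, so it is determined by its
heights, and it is the Connect Four sum of a multiset `D` of sets iff its height over each `γ`
counts the members of `D` containing `γ`. Sending a member `T` to its indicator and a
`{0,1}`-labelling to its support gives mutually inverse maps: `T` is a lower set iff its indicator
decreases along the edges of `G(Δ)`, and `G(Δ) - 1_T` is standard because it is the height
function of the remaining members. Conversely, the support of a standard component is a lower
set since the nodes `q(Δ)` form one and the labels decrease along edges.
-/

section LowerSet

variable {ι : Type*} {T : Set (ι → ℕ)}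

theorem compl_add_univ_eq_compl_iff_isLowerSet :
    Tᶜ + (Set.univ : Set (ι → ℕ)) = Tᶜ ↔ IsLowerSet T := by
  constructor
  · intro h c b hbc hc
    by_contra hb
    have : c ∈ Tᶜ + Set.univ := ⟨b, hb, c - b, trivial, add_tsub_cancel_of_le hbc⟩
    exact (h ▸ this) hc
  · intro h
    refine subset_antisymm ?_ fun x hx => ⟨x, hx, 0, trivial, add_zero x⟩
    rintro _ ⟨b, hb, v, -, rfl⟩ hbv
    exact hb (h le_self_add hbv)

theorem isStdSet_iff {n : ℕ} {T : Set (Fin n → ℕ)} :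
    IsStdSet T ↔ T.Finite ∧ IsLowerSet T := by
  rw [IsStdSet, compl_add_univ_eq_compl_iff_isLowerSet]

theorem isLowerSet_of_forall_add_single_mem [Finite ι] [DecidableEq ι]
    (h : ∀ g i, g + Pi.single i 1 ∈ T → g ∈ T) : IsLowerSet T := by
  have key : ∀ v b, b + v ∈ T → b ∈ T := by
    intro v
    induction v using Pi.single_induction with
    | zero => simp
    | add u w hu hw => exact fun b hb => hu b (hw (b + u) (by rwa [add_assoc]))
    | single i m =>
      induction m with
      | zero => simp
      | succ m ih =>
        intro b hb
        exact ih b (h _ i (by rwa [Pi.single_add, ← add_assoc] at hb))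
  intro c b hbc hc
  exact key (c - b) b (by rwa [add_tsub_cancel_of_le hbc])

end LowerSet

theorem IsLowerSet.eq_Iio_ncard {K : Set ℕ} (hK : IsLowerSet K) (hfin : K.Finite) :
    K = Set.Iio K.ncard := by
  obtain rfl | ⟨a, rfl⟩ := hK.eq_univ_or_Iio
  · exact absurd hfin Set.infinite_univ
  · rw [Set.ncard_Iio_nat]

section Height

variable {d : ℕ} {S : Set (Fin (d + 1) → ℕ)}

theorem proj_snoc (g : Fin d → ℕ) (k : ℕ) : proj (Fin.snoc g k : Fin (d + 1) → ℕ) = g :=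
  Fin.init_snoc (α := fun _ => ℕ) k g

theorem snoc_proj (b : Fin (d + 1) → ℕ) : Fin.snoc (proj b) (b (Fin.last d)) = b :=
  Fin.snoc_init_self b

theorem snoc_le_snoc {g g' : Fin d → ℕ} {k k' : ℕ} (hg : g ≤ g') (hk : k ≤ k') :
    (Fin.snoc g k : Fin (d + 1) → ℕ) ≤ Fin.snoc g' k' :=
  (Fin.snocOrderIso fun _ => ℕ).monotone (Prod.mk_le_mk.2 ⟨hk, hg⟩)

theorem height_eq_ncard (g : Fin d → ℕ) :
    height S g = {k | (Fin.snoc g k : Fin (d + 1) → ℕ) ∈ S}.ncard := by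
  have hfiber : {b ∈ S | proj b = g} = Fin.snoc g '' {k | Fin.snoc g k ∈ S} := by
    ext b
    constructor
    · rintro ⟨hb, rfl⟩
      exact ⟨b (Fin.last d), by rwa [Set.mem_ofPred_eq, snoc_proj], snoc_proj b⟩
    · rintro ⟨k, hk, rfl⟩
      exact ⟨hk, proj_snoc g k⟩
  rw [height, hfiber, Set.ncard_image_of_injective _ (Fin.snoc_right_injective _)]

theorem height_eq_of_forall_mem_iff (N : (Fin d → ℕ) → ℕ)
    (h : ∀ b, b ∈ S ↔ b (Fin.last d) < N (proj b)) (g : Fin d → ℕ) :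
    height S g = N g := by
  simp_rw [height_eq_ncard, h, proj_snoc, Fin.snoc_last]
  exact Set.ncard_Iio_nat (N g)

theorem IsLowerSet.mem_iff_lt_height (hS : IsLowerSet S) (hfin : S.Finite)
    (b : Fin (d + 1) → ℕ) : b ∈ S ↔ b (Fin.last d) < height S (proj b) := by
  set K := {k | (Fin.snoc (proj b) k : Fin (d + 1) → ℕ) ∈ S}
  have hK : IsLowerSet K := fun k j hjk hk => hS (snoc_le_snoc le_rfl hjk) hk
  have hKfin : K.Finite := hfin.preimage (Fin.snoc_right_injective _).injOn
  rw [height_eq_ncard, ← Set.mem_Iio, ← hK.eq_Iio_ncard hKfin, Set.mem_ofPred_eq, snoc_proj]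

theorem IsLowerSet.image_proj (hS : IsLowerSet S) : IsLowerSet (proj '' S) := by
  rintro _ g hg ⟨b, hb, rfl⟩
  refine ⟨Fin.snoc g (b (Fin.last d)), hS ?_ hb, proj_snoc _ _⟩
  simpa only [snoc_proj] using snoc_le_snoc hg (le_refl (b (Fin.last d)))

theorem snd_le_fst_of_mem_sEdges {p : (Fin d → ℕ) × (Fin d → ℕ)} (hp : p ∈ sEdges S) :
    p.2 ≤ p.1 := by
  obtain ⟨-, -, i, hi⟩ := hp
  exact hi ▸ le_self_add

end Height

section StackHeight

variable {α : Type*}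

/-- The height over `a` of the Connect Four sum of the members of `D`. -/
noncomputable def stackHeight (D : Multiset (Set α)) (a : α) : ℕ :=
  (D.map fun T => T.indicator (fun _ => 1) a).sum

theorem indicator_one_le_indicator_one {T : Set α} {a b : α} (h : a ∈ T → b ∈ T) :
    T.indicator (fun _ => (1 : ℕ)) a ≤ T.indicator (fun _ => 1) b := by
  by_cases ha : a ∈ T <;> simp [ha, h]

theorem support_indicator_one (T : Set α) :
    Function.support (T.indicator fun _ => (1 : ℕ)) = T := by
  ext a
  by_cases ha : a ∈ T <;> simp [ha]

theorem indicator_support_of_le_one {H : α → ℕ} (hH : ∀ a, H a ≤ 1) :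
    (Function.support H).indicator (fun _ => 1) = H := by
  ext a
  rcases Nat.le_one_iff_eq_zero_or_eq_one.1 (hH a) with ha | ha <;> simp [ha]

theorem stackHeight_eq_indicator_add_stackHeight_erase [DecidableEq (Set α)]
    {D : Multiset (Set α)} {T : Set α} (hT : T ∈ D) (a : α) :
    stackHeight D a = T.indicator (fun _ => 1) a + stackHeight (D.erase T) a := by
  conv_lhs => rw [stackHeight, ← Multiset.cons_erase hT]
  rw [Multiset.map_cons, Multiset.sum_cons, stackHeight]

theorem stackHeight_le_stackHeight {D : Multiset (Set α)} {a b : α}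
    (h : ∀ T ∈ D, a ∈ T → b ∈ T) : stackHeight D a ≤ stackHeight D b :=
  Multiset.sum_map_le_sum_map _ _ fun T hT => indicator_one_le_indicator_one (h T hT)

theorem stackHeight_map_support {D : Multiset (α → ℕ)} (hD : ∀ H ∈ D, ∀ a, H a ≤ 1)
    (a : α) :
    stackHeight (D.map Function.support) a = (D.map fun H => H a).sum := by
  rw [stackHeight, Multiset.map_map]
  congr 1
  exact Multiset.map_congr rfl fun H hH => congrFun (indicator_support_of_le_one (hD H hH)) a

end StackHeight

theorem Multiset.map_map_eq_self {α β : Type*} {s : Multiset α} {f : α → β} {g : β → α}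
    (h : ∀ a ∈ s, g (f a) = a) : (s.map f).map g = s := by
  rw [Multiset.map_map]
  exact (Multiset.map_congr rfl h).trans s.map_id'

section Decompositions

variable {d : ℕ} {S : Set (Fin (d + 1) → ℕ)}

theorem IsC4Decomp.height_eq {D : Multiset (Set (Fin d → ℕ))} (hD : IsC4Decomp S D) :
    height S = stackHeight D :=
  funext (height_eq_of_forall_mem_iff _ hD.2)

theorem IsC4Decomp.isStdCompOf_indicator {D : Multiset (Set (Fin d → ℕ))} (hD : IsC4Decomp S D)
    {T : Set (Fin d → ℕ)} (hT : T ∈ D) : IsStdCompOf S (T.indicator fun _ => 1) := by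
  classical
  have hlower : ∀ T' ∈ D, IsLowerSet T' := fun T' hT' => (isStdSet_iff.1 (hD.1 T' hT').1).2
  have hsplit := stackHeight_eq_indicator_add_stackHeight_erase hT
  rw [IsStdCompOf, hD.height_eq]
  refine ⟨fun g => ?_, fun g hg => ?_, fun p hp => ?_, fun g => ?_, fun p hp => ?_, ?_⟩
  · by_cases hg : g ∈ T <;> simp [hg]
  · by_contra hne
    have hpos : 0 < stackHeight D g := by rw [hsplit]; omega
    exact hg ⟨Fin.snoc g 0, (hD.2 _).2 (by rwa [proj_snoc, Fin.snoc_last]), proj_snoc g 0⟩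
  · exact indicator_one_le_indicator_one ((hlower T hT) (snd_le_fst_of_mem_sEdges hp))
  · rw [hsplit]
    exact le_self_add
  · rw [hsplit, hsplit, Nat.add_sub_cancel_left, Nat.add_sub_cancel_left]
    exact stackHeight_le_stackHeight fun T' hT' =>
      hlower T' (Multiset.mem_of_mem_erase hT') (snd_le_fst_of_mem_sEdges hp)
  · obtain ⟨g, hg⟩ := (hD.1 T hT).2
    exact ⟨g, by simp [hg]⟩

theorem IsC4Decomp.isStdDecompOf_map_indicator {D : Multiset (Set (Fin d → ℕ))}
    (hD : IsC4Decomp S D) : IsStdDecompOf S (D.map fun T => T.indicator fun _ => 1) := by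
  refine ⟨?_, fun g => ?_⟩
  · simp only [Multiset.mem_map]
    rintro _ ⟨T, hT, rfl⟩
    exact hD.isStdCompOf_indicator hT
  · rw [Multiset.map_map, hD.height_eq]
    rfl

theorem IsStdCompOf.isStdSet_support (hS : IsStdSet S) {H : (Fin d → ℕ) → ℕ}
    (hH : IsStdCompOf S H) : IsStdSet (Function.support H) := by
  obtain ⟨-, hnode, hedge, -, -, -⟩ := hH
  have hsub : Function.support H ⊆ proj '' S := fun g hg => by_contra fun h => hg (hnode g h)
  refine isStdSet_iff.2 ⟨(hS.1.image proj).subset hsub, ?_⟩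
  refine isLowerSet_of_forall_add_single_mem fun g i hgi => ?_
  have hnode' : g ∈ proj '' S := (isStdSet_iff.1 hS).2.image_proj le_self_add (hsub hgi)
  have hmono : H (g + Pi.single i 1) ≤ H g := hedge (_, g) ⟨hsub hgi, hnode', i, rfl⟩
  simp only [Function.mem_support] at hgi ⊢
  omega

theorem IsStdDecompOf.isC4Decomp_map_support (hS : IsStdSet S)
    {D : Multiset ((Fin d → ℕ) → ℕ)} (hD : IsStdDecompOf S D) :
    IsC4Decomp S (D.map Function.support) := by
  refine ⟨?_, fun b => ?_⟩
  · simp only [Multiset.mem_map]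
    rintro _ ⟨H, hH, rfl⟩
    exact ⟨(hD.1 H hH).isStdSet_support hS, (hD.1 H hH).2.2.2.2.2⟩
  · have hS' := isStdSet_iff.1 hS
    rw [hS'.2.mem_iff_lt_height hS'.1, ← hD.2,
      ← stackHeight_map_support fun H hH => (hD.1 H hH).1]
    rfl

end Decompositions

/-- The Connect Four decompositions of a finite standard set `Δ` are in bijection with
the standard decompositions of its standard graph `G(Δ)`. -/
theorem c4Decomp_equiv_stdDecomp {d : ℕ} (S : Set (Fin (d + 1) → ℕ))
    (hS : IsStdSet S) :
    Nonempty ({D : Multiset (Set (Fin d → ℕ)) // IsC4Decomp S D} ≃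
      {D : Multiset ((Fin d → ℕ) → ℕ) // IsStdDecompOf S D}) :=
  ⟨{ toFun := fun D =>
       ⟨D.1.map fun T => T.indicator fun _ => 1, D.2.isStdDecompOf_map_indicator⟩
     invFun := fun D => ⟨D.1.map Function.support, D.2.isC4Decomp_map_support hS⟩
     left_inv := fun _ => Subtype.ext <|
       Multiset.map_map_eq_self fun T _ => support_indicator_one T
     right_inv := fun D => Subtype.ext <|
       Multiset.map_map_eq_self fun H hH => indicator_support_of_le_one (D.2.1 H hH).1 }⟩
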